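/- Let ρ = Σ_k q_k (⊗_{j=1}^N ρ_{jk}) be a separable density matrix on the N-fold tensor product of finite-dimensional local Hilbert spaces, where q_k ≥ 0, Σ_k q_k = 1 and each ρ_{jk} is a density matrix on the j-th factor. For each j let P_j be a Hermitian matrix on the j-th factor and let V = Σ_{j=1}^N (−1)^j P̃_j. Then ⟨ΔV²⟩_ρ = Tr(ρV²) − (Tr(ρV))² ≥ Σ_k q_k Σ_{j=1}^N ⟨ΔP_j²⟩_{ρ_{jk}}. -/
import Mathlib


open Matrix BigOperators Finset ComplexOrder

noncomputable section

/-- Tensor product of local matrices: `(⊗_j A_j)(a,b) = Π_j A_j (a j) (b j)`. -/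
def tensorProd {N : ℕ} {ι : Fin N → Type} [∀ j, Fintype (ι j)]
    (A : ∀ j, Matrix (ι j) (ι j) ℂ) : Matrix (∀ j, ι j) (∀ j, ι j) ℂ :=
  Matrix.of fun a b => ∏ j, A j (a j) (b j)

/-- Lift of a local matrix `X` on the `j`-th factor: `X` tensored with the identity
on all other factors. -/
def liftOp {N : ℕ} {ι : Fin N → Type} [∀ j, Fintype (ι j)] [∀ j, DecidableEq (ι j)]
    (j : Fin N) (X : Matrix (ι j) (ι j) ℂ) : Matrix (∀ j, ι j) (∀ j, ι j) ℂ :=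
  Matrix.of fun a b =>
    X (a j) (b j) * ∏ l ∈ Finset.univ.erase j, (if a l = b l then (1 : ℂ) else 0)

/-- A density matrix: positive semidefinite (hence Hermitian) with unit trace. -/
def IsDensityMatrix {n : Type} [Fintype n] (ρ : Matrix n n ℂ) : Prop :=
  ρ.PosSemidef ∧ ρ.trace = 1

/-- Expectation value `⟨A⟩_ρ = Tr(ρ A)` (real part; it is real for Hermitian `ρ`, `A`). -/
def expVal {n : Type} [Fintype n] (ρ A : Matrix n n ℂ) : ℝ := ((ρ * A).trace).re

/-- Variance `⟨ΔA²⟩_ρ = Tr(ρ A²) − (Tr(ρ A))²`. -/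
def varVal {n : Type} [Fintype n] (ρ A : Matrix n n ℂ) : ℝ :=
  expVal ρ (A * A) - (expVal ρ A) ^ 2

set_option linter.unusedSectionVars false

section Aux
variable {N : ℕ} {ι : Fin N → Type} [∀ j, Fintype (ι j)] [∀ j, DecidableEq (ι j)]

lemma sum_pi_prod (f : ∀ m, ι m → ℂ) :
    ∑ a : ∀ m, ι m, ∏ m, f m (a m) = ∏ m, ∑ x, f m x := by
  rw [Finset.prod_univ_sum, Fintype.piFinset_univ]

lemma sum_pi_prod3 (f : ∀ m, ι m → ι m → ι m → ℂ) :
    ∑ a : ∀ m, ι m, ∑ b : ∀ m, ι m, ∑ c : ∀ m, ι m, ∏ m, f m (a m) (b m) (c m)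
      = ∏ m, ∑ x, ∑ y, ∑ z, f m x y z := by
  have h1 : ∀ (a b : ∀ m, ι m), ∑ c : ∀ m, ι m, ∏ m, f m (a m) (b m) (c m)
      = ∏ m, ∑ z, f m (a m) (b m) z := fun a b => sum_pi_prod (fun m z => f m (a m) (b m) z)
  simp only [h1]
  have h2 : ∀ (a : ∀ m, ι m), ∑ b : ∀ m, ι m, ∏ m, ∑ z, f m (a m) (b m) z
      = ∏ m, ∑ y, ∑ z, f m (a m) y z := fun a => sum_pi_prod (fun m y => ∑ z, f m (a m) y z)
  simp only [h2]
  exact sum_pi_prod (fun m x => ∑ y, ∑ z, f m x y z)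

lemma trace_mul_eq {n : Type} [Fintype n] (R X : Matrix n n ℂ) :
    (R * X).trace = ∑ x, ∑ y, R x y * X y x := by
  simp [Matrix.trace, Matrix.mul_apply, Matrix.diag]

lemma prod_dite_eq_single (j : Fin N) (g : ι j → ι j → ℂ) (b c : ∀ m, ι m) :
    (∏ m, (if h : m = j then g (h ▸ b m) (h ▸ c m) else if b m = c m then (1:ℂ) else 0))
      = g (b j) (c j) * ∏ m ∈ univ.erase j, (if b m = c m then (1:ℂ) else 0) := by
  rw [← Finset.mul_prod_erase univ _ (Finset.mem_univ j)]
  congr 1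
  · rw [dif_pos rfl]
  · exact Finset.prod_congr rfl fun m hm => dif_neg (Finset.ne_of_mem_erase hm)

lemma key_expand (R : ∀ m, Matrix (ι m) (ι m) ℂ) (j l : Fin N)
    (X : Matrix (ι j) (ι j) ℂ) (Y : Matrix (ι l) (ι l) ℂ) :
    (tensorProd R * (liftOp j X * liftOp l Y)).trace =
      ∏ m, ∑ x, ∑ y, ∑ z, (R m x y *
        (if h : m = j then X (h ▸ y) (h ▸ z) else if y = z then (1:ℂ) else 0) *
        (if h : m = l then Y (h ▸ z) (h ▸ x) else if z = x then (1:ℂ) else 0)) := by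
  rw [← sum_pi_prod3]
  simp only [Matrix.trace, Matrix.diag, Matrix.mul_apply, Finset.sum_mul, Finset.mul_sum]
  refine Finset.sum_congr rfl fun a _ => Finset.sum_congr rfl fun b _ =>
    Finset.sum_congr rfl fun c _ => ?_
  rw [Finset.prod_mul_distrib, Finset.prod_mul_distrib,
    prod_dite_eq_single j (fun y z => X y z) b c,
    prod_dite_eq_single l (fun z x => Y z x) c a]
  simp only [tensorProd, liftOp, Matrix.of_apply]
  ring

lemma trace_lift_mul_lift_ne (R : ∀ m, Matrix (ι m) (ι m) ℂ) (hR : ∀ m, (R m).trace = 1)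
    {j l : Fin N} (hjl : j ≠ l) (X : Matrix (ι j) (ι j) ℂ) (Y : Matrix (ι l) (ι l) ℂ) :
    (tensorProd R * (liftOp j X * liftOp l Y)).trace = (R j * X).trace * (R l * Y).trace := by
  rw [key_expand]
  have hl : l ∈ univ.erase j := Finset.mem_erase.2 ⟨hjl.symm, Finset.mem_univ l⟩
  rw [← Finset.mul_prod_erase univ _ (Finset.mem_univ j), ← Finset.mul_prod_erase _ _ hl]
  have h1 : ∑ x, ∑ y, ∑ z, (R j x y *
        (if h : j = j then X (h ▸ y) (h ▸ z) else if y = z then (1:ℂ) else 0) *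
        (if h : j = l then Y (h ▸ z) (h ▸ x) else if z = x then (1:ℂ) else 0))
      = (R j * X).trace := by
    rw [trace_mul_eq]
    simp [dif_neg hjl, mul_ite, Finset.sum_ite_eq']
  have h2 : ∑ x, ∑ y, ∑ z, (R l x y *
        (if h : l = j then X (h ▸ y) (h ▸ z) else if y = z then (1:ℂ) else 0) *
        (if h : l = l then Y (h ▸ z) (h ▸ x) else if z = x then (1:ℂ) else 0))
      = (R l * Y).trace := by
    rw [trace_mul_eq]
    simp [dif_neg hjl.symm, ite_mul, Finset.sum_ite_eq']
  have h3 : ∀ m ∈ (univ.erase j).erase l, (∑ x, ∑ y, ∑ z, (R m x y *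
        (if h : m = j then X (h ▸ y) (h ▸ z) else if y = z then (1:ℂ) else 0) *
        (if h : m = l then Y (h ▸ z) (h ▸ x) else if z = x then (1:ℂ) else 0))) = 1 := by
    intro m hm
    have hml : m ≠ l := Finset.ne_of_mem_erase hm
    have hmj : m ≠ j := Finset.ne_of_mem_erase (Finset.mem_of_mem_erase hm)
    have := hR m
    simpa [Matrix.trace, Matrix.diag, dif_neg hmj, dif_neg hml, mul_ite, ite_mul,
      Finset.sum_ite_eq, Finset.sum_ite_eq'] using this
  rw [h1, h2, Finset.prod_eq_one h3, mul_one]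

lemma trace_lift_mul_lift_eq (R : ∀ m, Matrix (ι m) (ι m) ℂ) (hR : ∀ m, (R m).trace = 1)
    (j : Fin N) (X Y : Matrix (ι j) (ι j) ℂ) :
    (tensorProd R * (liftOp j X * liftOp j Y)).trace = (R j * (X * Y)).trace := by
  rw [key_expand]
  rw [← Finset.mul_prod_erase univ _ (Finset.mem_univ j)]
  have h1 : ∑ x, ∑ y, ∑ z, (R j x y *
        (if h : j = j then X (h ▸ y) (h ▸ z) else if y = z then (1:ℂ) else 0) *
        (if h : j = j then Y (h ▸ z) (h ▸ x) else if z = x then (1:ℂ) else 0))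
      = (R j * (X * Y)).trace := by
    rw [trace_mul_eq]
    simp [Matrix.mul_apply, Finset.mul_sum, mul_assoc]
  have h3 : ∀ m ∈ univ.erase j, (∑ x, ∑ y, ∑ z, (R m x y *
        (if h : m = j then X (h ▸ y) (h ▸ z) else if y = z then (1:ℂ) else 0) *
        (if h : m = j then Y (h ▸ z) (h ▸ x) else if z = x then (1:ℂ) else 0))) = 1 := by
    intro m hm
    have hmj : m ≠ j := Finset.ne_of_mem_erase hm
    have := hR m
    simpa [Matrix.trace, Matrix.diag, dif_neg hmj, mul_ite, ite_mul,
      Finset.sum_ite_eq, Finset.sum_ite_eq'] using this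
  rw [h1, Finset.prod_eq_one h3, mul_one]

lemma trace_tensor_lift (R : ∀ m, Matrix (ι m) (ι m) ℂ) (hR : ∀ m, (R m).trace = 1)
    (j : Fin N) (X : Matrix (ι j) (ι j) ℂ) :
    (tensorProd R * liftOp j X).trace = (R j * X).trace := by
  have : ∑ a : ∀ m, ι m, ∑ b : ∀ m, ι m, ∏ m, (R m (a m) (b m) *
      (if h : m = j then X (h ▸ b m) (h ▸ a m) else if b m = a m then (1:ℂ) else 0))
      = ∏ m, ∑ x, ∑ y, (R m x y *
      (if h : m = j then X (h ▸ y) (h ▸ x) else if y = x then (1:ℂ) else 0)) := by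
    have h1 : ∀ (a : ∀ m, ι m), ∑ b : ∀ m, ι m, ∏ m, (R m (a m) (b m) *
        (if h : m = j then X (h ▸ b m) (h ▸ a m) else if b m = a m then (1:ℂ) else 0))
        = ∏ m, ∑ y, (R m (a m) y *
        (if h : m = j then X (h ▸ y) (h ▸ a m) else if y = a m then (1:ℂ) else 0)) :=
      fun a => sum_pi_prod (fun m y => R m (a m) y *
        (if h : m = j then X (h ▸ y) (h ▸ a m) else if y = a m then (1:ℂ) else 0))
    simp only [h1]
    exact sum_pi_prod (fun m x => ∑ y, (R m x y *
      (if h : m = j then X (h ▸ y) (h ▸ x) else if y = x then (1:ℂ) else 0)))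
  calc (tensorProd R * liftOp j X).trace
      = ∑ a : ∀ m, ι m, ∑ b : ∀ m, ι m, ∏ m, (R m (a m) (b m) *
        (if h : m = j then X (h ▸ b m) (h ▸ a m) else if b m = a m then (1:ℂ) else 0)) := by
        simp only [Matrix.trace, Matrix.diag, Matrix.mul_apply]
        refine Finset.sum_congr rfl fun a _ => Finset.sum_congr rfl fun b _ => ?_
        rw [Finset.prod_mul_distrib, prod_dite_eq_single j (fun y x => X y x) b a]
        simp only [tensorProd, liftOp, Matrix.of_apply]
    _ = ∏ m, ∑ x, ∑ y, (R m x y *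
        (if h : m = j then X (h ▸ y) (h ▸ x) else if y = x then (1:ℂ) else 0)) := this
    _ = (R j * X).trace := by
        rw [← Finset.mul_prod_erase univ _ (Finset.mem_univ j)]
        have h1 : ∑ x, ∑ y, (R j x y *
            (if h : j = j then X (h ▸ y) (h ▸ x) else if y = x then (1:ℂ) else 0))
            = (R j * X).trace := by
          rw [trace_mul_eq]; simp
        have h3 : ∀ m ∈ univ.erase j, (∑ x, ∑ y, (R m x y *
            (if h : m = j then X (h ▸ y) (h ▸ x) else if y = x then (1:ℂ) else 0))) = 1 := by
          intro m hm
          have hmj : m ≠ j := Finset.ne_of_mem_erase hm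
          have := hR m
          simpa [Matrix.trace, Matrix.diag, dif_neg hmj, mul_ite,
            Finset.sum_ite_eq, Finset.sum_ite_eq'] using this
        rw [h1, Finset.prod_eq_one h3, mul_one]

lemma trace_mul_real {n : Type} [Fintype n] {R A : Matrix n n ℂ}
    (hR : R.IsHermitian) (hA : A.IsHermitian) :
    (((R * A).trace.re : ℝ) : ℂ) = (R * A).trace := by
  have h : (starRingEnd ℂ) (R * A).trace = (R * A).trace := by
    have := Matrix.trace_conjTranspose (R * A)
    rw [Matrix.conjTranspose_mul, hR.eq, hA.eq, Matrix.trace_mul_comm] at this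
    simpa [Complex.star_def] using this.symm
  exact Complex.conj_eq_iff_re.1 h
end Aux

/-- For a separable state `ρ = Σ_k q_k ⊗_j ρ_{jk}` and `V = Σ_j (−1)^j P̃_j`, the variance of
`V` is bounded below by the mixture average of the sums of local variances. -/
theorem separable_variance_V_ge_avg_local
    {N : ℕ} {ι : Fin N → Type} [∀ j, Fintype (ι j)] [∀ j, DecidableEq (ι j)]
    {K : Type} [Fintype K]
    (q : K → ℝ) (hq0 : ∀ k, 0 ≤ q k) (hq1 : ∑ k, q k = 1)
    (ρloc : K → ∀ j, Matrix (ι j) (ι j) ℂ)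
    (hρloc : ∀ k j, IsDensityMatrix (ρloc k j))
    (ρ : Matrix (∀ j, ι j) (∀ j, ι j) ℂ)
    (hρ : ρ = ∑ k, (q k : ℂ) • tensorProd (ρloc k))
    (P : ∀ j, Matrix (ι j) (ι j) ℂ) (hP : ∀ j, (P j).IsHermitian)
    (V : Matrix (∀ j, ι j) (∀ j, ι j) ℂ)
    (hV : V = ∑ j : Fin N, ((-1 : ℂ) ^ ((j : ℕ) + 1)) • liftOp j (P j)) :
    varVal ρ V ≥ ∑ k, q k * ∑ j, varVal (ρloc k j) (P j) := by
  have hher : ∀ k j, (ρloc k j).IsHermitian := fun k j => (hρloc k j).1.1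
  have htr1 : ∀ k j, (ρloc k j).trace = 1 := fun k j => (hρloc k j).2
  have hP2 : ∀ j, (P j * P j).IsHermitian := fun j => by
    rw [Matrix.IsHermitian, Matrix.conjTranspose_mul, (hP j).eq]
  set ε : Fin N → ℝ := fun j => (-1 : ℝ) ^ ((j : ℕ) + 1) with hεdef
  have hεsq : ∀ j, ε j * ε j = 1 := by
    intro j
    rw [hεdef, ← pow_add]
    exact Even.neg_one_pow ⟨(j : ℕ) + 1, rfl⟩
  set m : K → Fin N → ℝ := fun k j => expVal (ρloc k j) (P j) with hmdef
  set s : K → Fin N → ℝ := fun k j => expVal (ρloc k j) (P j * P j) with hsdef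
  have hmc : ∀ k j, ((m k j : ℝ) : ℂ) = ((ρloc k j) * P j).trace :=
    fun k j => trace_mul_real (hher k j) (hP j)
  have hsc : ∀ k j, ((s k j : ℝ) : ℂ) = ((ρloc k j) * (P j * P j)).trace :=
    fun k j => trace_mul_real (hher k j) (hP2 j)
  set M : K → ℝ := fun k => ∑ j, ε j * m k j with hMdef
  have key1 : ∀ k (j : Fin N), (tensorProd (ρloc k) * liftOp j (P j)).trace = ((m k j : ℝ) : ℂ) :=
    fun k j => (trace_tensor_lift (ρloc k) (htr1 k) j (P j)).trans (hmc k j).symm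
  have key2 : ∀ k (j l : Fin N),
      (tensorProd (ρloc k) * (liftOp j (P j) * liftOp l (P l))).trace
        = (((if j = l then s k j else m k j * m k l : ℝ)) : ℂ) := by
    intro k j l
    by_cases h : j = l
    · subst h
      rw [if_pos rfl, trace_lift_mul_lift_eq (ρloc k) (htr1 k) j (P j) (P j), hsc k j]
    · rw [if_neg h, trace_lift_mul_lift_ne (ρloc k) (htr1 k) h (P j) (P l)]
      push_cast
      rw [hmc k j, hmc k l]
  have hcast : ∀ (j : Fin N), ((-1 : ℂ)) ^ ((j : ℕ) + 1) = ((ε j : ℝ) : ℂ) := by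
    intro j; rw [hεdef]; push_cast; ring
  have hTrV : (ρ * V).trace = ((∑ k, q k * M k : ℝ) : ℂ) := by
    rw [hρ, hV, Finset.sum_mul]
    simp only [Finset.mul_sum, Matrix.smul_mul, Matrix.mul_smul, Matrix.trace_sum,
      Matrix.trace_smul, smul_eq_mul, key1, hcast, hMdef]
    push_cast
    exact Finset.sum_congr rfl fun k _ =>
      Finset.sum_congr rfl fun j _ => by ring
  have hTrVV : (ρ * (V * V)).trace
      = ((∑ k, q k * ∑ j, ∑ l, (ε j * ε l * (if j = l then s k j else m k j * m k l)) : ℝ) : ℂ) := by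
    rw [hρ, hV, Finset.sum_mul, Finset.sum_mul]
    simp only [Finset.mul_sum, Matrix.smul_mul, Matrix.mul_smul, Matrix.trace_sum,
      Matrix.trace_smul, smul_eq_mul, key2, hcast]
    push_cast [apply_ite (fun r : ℝ => (r : ℂ))]
    exact Finset.sum_congr rfl fun k _ =>
      Finset.sum_congr rfl fun j _ =>
        Finset.sum_congr rfl fun l _ => by ring
  have hvarV : varVal ρ V
      = (∑ k, q k * ∑ j, ∑ l, (ε j * ε l * (if j = l then s k j else m k j * m k l)))
        - (∑ k, q k * M k) ^ 2 := by
    rw [varVal, expVal, expVal, hTrV, hTrVV, Complex.ofReal_re, Complex.ofReal_re]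
  have key3 : ∀ k, ∑ j, ∑ l, (ε j * ε l * (if j = l then s k j else m k j * m k l))
      = (∑ j, (s k j - m k j ^ 2)) + M k ^ 2 := by
    intro k
    have hM2 : M k ^ 2 = ∑ j, ∑ l, (ε j * m k j) * (ε l * m k l) := by
      rw [sq, hMdef, Finset.sum_mul_sum]
    have hdiag : ∀ j : Fin N, ∑ l, (ε j * ε l * (if j = l then s k j else m k j * m k l)
        - (ε j * m k j) * (ε l * m k l)) = s k j - m k j ^ 2 := by
      intro j
      rw [Finset.sum_eq_single j]
      · rw [if_pos rfl]
        linear_combination (s k j - m k j ^ 2) * hεsq j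
      · intro l _ hlj
        rw [if_neg (Ne.symm hlj)]
        ring
      · intro h; exact absurd (Finset.mem_univ j) h
    have h4 : ∑ j, ∑ l, (ε j * ε l * (if j = l then s k j else m k j * m k l))
        - ∑ j, ∑ l, (ε j * m k j) * (ε l * m k l) = ∑ j, (s k j - m k j ^ 2) := by
      rw [← Finset.sum_sub_distrib]
      refine Finset.sum_congr rfl fun j _ => ?_
      rw [← Finset.sum_sub_distrib]
      exact hdiag j
    linarith [h4, hM2]
  have hCS : (∑ k, q k * M k) ^ 2 ≤ ∑ k, q k * M k ^ 2 := by
    have := Finset.sum_sq_le_sum_mul_sum_of_sq_eq_mul Finset.univ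
      (r := fun k => q k * M k) (f := q) (g := fun k => q k * M k ^ 2)
      (fun k _ => hq0 k) (fun k _ => mul_nonneg (hq0 k) (sq_nonneg _))
      (fun k _ => by ring)
    rwa [hq1, one_mul] at this
  have hRHS : ∀ k, (∑ j, varVal (ρloc k j) (P j)) = ∑ j, (s k j - m k j ^ 2) :=
    fun k => Finset.sum_congr rfl fun j _ => rfl
  have hsplit : ∑ k, q k * ((∑ j, (s k j - m k j ^ 2)) + M k ^ 2)
      = (∑ k, q k * ∑ j, (s k j - m k j ^ 2)) + ∑ k, q k * M k ^ 2 := by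
    rw [← Finset.sum_add_distrib]
    exact Finset.sum_congr rfl fun k _ => by ring
  have hvarV2 : varVal ρ V = (∑ k, q k * ∑ j, (s k j - m k j ^ 2))
      + ((∑ k, q k * M k ^ 2) - (∑ k, q k * M k) ^ 2) := by
    rw [hvarV]
    have : ∑ k, q k * ∑ j, ∑ l, (ε j * ε l * (if j = l then s k j else m k j * m k l))
        = ∑ k, q k * ((∑ j, (s k j - m k j ^ 2)) + M k ^ 2) :=
      Finset.sum_congr rfl fun k _ => by rw [key3 k]
    rw [this, hsplit]
    ring
  rw [ge_iff_le, hvarV2]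
  have : ∑ k, q k * ∑ j, varVal (ρloc k j) (P j) = ∑ k, q k * ∑ j, (s k j - m k j ^ 2) :=
    Finset.sum_congr rfl fun k _ => by rw [hRHS k]
  rw [this]
  linarith [hCS]
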